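/- The boxes B(L) = [−e^L, e^L] × [−e^L, e^L] × [−L, L] form a Følner family for Sol: the Lebesgue measure of B(L) equals 8·L·e^{2L} (Lebesgue measure on ℝ³ coincides with the Riemannian volume of Sol), and there is a universal constant C₀ > 0 such that for all L ≥ 1 the Lebesgue measure of the set { p ∈ ℝ³ : there exist q ∈ B(L) and q′ ∈ ℝ³ ∖ B(L) with d_Sol(p,q) ≤ 1 and d_Sol(p,q′) ≤ 1 } is at most C₀·e^{2L}; consequently the ratio of the measure of this boundary neighborhood to the measure of B(L) tends to 0 as L → ∞. -/

import Mathlib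

open Set

noncomputable section

/-- A path `γ : ℝ → E` is piecewise `C¹` on `[0,1]`. -/
def PiecewiseC1 {E : Type*} [NormedAddCommGroup E] [NormedSpace ℝ E] (γ : ℝ → E) : Prop :=
  ∃ (n : ℕ) (τ : ℕ → ℝ), τ 0 = 0 ∧ τ n = 1 ∧ (∀ i < n, τ i ≤ τ (i + 1)) ∧
    ∀ i < n, ContDiffOn ℝ 1 γ (Set.Icc (τ i) (τ (i + 1)))

/-- The `Sol` length of a path `γ(t) = (x(t), y(t), z(t))`, for the metric
`ds² = e^{-z} dx² + e^{z} dy² + dz²`. -/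
def solLength (γ : ℝ → ℝ × ℝ × ℝ) : ℝ :=
  ∫ t in (0:ℝ)..1,
    Real.sqrt (Real.exp (-(γ t).2.2) * (deriv (fun s => (γ s).1) t) ^ 2 +
      Real.exp ((γ t).2.2) * (deriv (fun s => (γ s).2.1) t) ^ 2 +
      (deriv (fun s => (γ s).2.2) t) ^ 2)

/-- The left-invariant distance on `Sol = ℝ³`. -/
def dSol (p q : ℝ × ℝ × ℝ) : ℝ :=
  sInf {ℓ : ℝ | ∃ γ : ℝ → ℝ × ℝ × ℝ,
    γ 0 = p ∧ γ 1 = q ∧ PiecewiseC1 γ ∧ solLength γ = ℓ}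

/-- Height function on `Sol`. -/
def solHeight (p : ℝ × ℝ × ℝ) : ℝ := p.2.2

/-- `f` is a `(K, C)`-quasi-isometric embedding with respect to the given distances. -/
def IsQIE {X Y : Type*} (dX : X → X → ℝ) (dY : Y → Y → ℝ) (K C : ℝ) (f : X → Y) : Prop :=
  ∀ a b : X, (1 / K) * dX a b - C ≤ dY (f a) (f b) ∧ dY (f a) (f b) ≤ K * dX a b + C

/-- `f` is a `(K, C)`-quasi-isometry with respect to the given distances. -/
def IsQI {X Y : Type*} (dX : X → X → ℝ) (dY : Y → Y → ℝ) (K C : ℝ) (f : X → Y) : Prop :=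
  IsQIE dX dY K C f ∧ ∀ y : Y, ∃ x : X, dY (f x) y ≤ C

/-- Two "metric spaces", given by distance functions, are quasi-isometric. -/
def QuasiIsometric {X Y : Type*} (dX : X → X → ℝ) (dY : Y → Y → ℝ) : Prop :=
  ∃ (K C : ℝ) (f : X → Y), 1 ≤ K ∧ 0 ≤ C ∧ IsQI dX dY K C f

open MeasureTheory

/-- The box `B(L) = [-e^L, e^L] × [-e^L, e^L] × [-L, L]` in `Sol = ℝ³`. -/
def solBox (L : ℝ) : Set (ℝ × ℝ × ℝ) :=
  Set.Icc (-Real.exp L) (Real.exp L) ×ˢ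
    (Set.Icc (-Real.exp L) (Real.exp L) ×ˢ Set.Icc (-L) L)

/-- The `1`-neighborhood (for `d_Sol`) of the boundary of the box `B(L)`: points within
`d_Sol`-distance 1 of both `B(L)` and its complement. -/
def solBoxBdryNbhd (L : ℝ) : Set (ℝ × ℝ × ℝ) :=
  {p : ℝ × ℝ × ℝ | (∃ q ∈ solBox L, dSol p q ≤ 1) ∧
    ∃ q' : ℝ × ℝ × ℝ, q' ∉ solBox L ∧ dSol p q' ≤ 1}

/-!
Along a path of `Sol`-length `ℓ` the height changes by at most `ℓ`, and the metric gives
`|x'| ≤ e^{z/2}·|γ'|` and `|y'| ≤ e^{-z/2}·|γ'|`. So a path of length `ℓ` starting at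
height `z₀` moves `x` by at most `e^{(z₀+ℓ)/2}·ℓ` and `y` by at most `e^{(-z₀+ℓ)/2}·ℓ`.
A point within distance `1` of both `B(L)` and its complement therefore lies in a shell
around `∂B(L)` of thickness `O(e^{L/2})` in the `x`- and `y`-directions and `O(1)` in the
`z`-direction, whose volume is `O(e^{L/2} · e^{L} · L + e^{2L}) = O(e^{2L})`.
-/

open Filter Real

section PiecewiseFTC

variable {E : Type*} [NormedAddCommGroup E] {a b : ℝ}

theorem intervalIntegrable_of_eqOn_Ioo {f g : ℝ → E} (hab : a ≤ b)
    (hg : ContinuousOn g (Icc a b)) (hfg : EqOn f g (Ioo a b)) :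
    IntervalIntegrable f volume a b := by
  rw [intervalIntegrable_iff_integrableOn_Ioo_of_le hab]
  exact (hg.integrableOn_Icc.mono_set Ioo_subset_Icc_self).congr_fun hfg.symm measurableSet_Ioo

variable [NormedSpace ℝ E] {w : ℝ → E}

theorem eqOn_deriv_derivWithin_Icc : EqOn (deriv w) (derivWithin w (Icc a b)) (Ioo a b) :=
  fun _ ht => (derivWithin_of_mem_nhds (Icc_mem_nhds ht.1 ht.2)).symm

theorem ContDiffOn.intervalIntegrable_deriv (hab : a ≤ b) (hw : ContDiffOn ℝ 1 w (Icc a b)) :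
    IntervalIntegrable (deriv w) volume a b := by
  rcases hab.eq_or_lt with rfl | hab
  · exact .refl
  exact intervalIntegrable_of_eqOn_Ioo hab.le
    (hw.continuousOn_derivWithin (uniqueDiffOn_Icc hab) le_rfl) eqOn_deriv_derivWithin_Icc

theorem ContDiffOn.min_Icc (hab : a ≤ b) (hw : ContDiffOn ℝ 1 w (Icc a b)) (t : ℝ) :
    ContDiffOn ℝ 1 w (Icc (min a t) (min b t)) := by
  rcases le_or_gt a t with hat | hta
  · exact hw.mono (Icc_subset_Icc (le_min le_rfl hat) (min_le_left b t))
  · rw [min_eq_right hta.le, min_eq_right (hta.trans_le hab).le, Icc_self]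
    exact contDiffOn_const.congr fun x hx => by rw [mem_singleton_iff.mp hx]

variable [CompleteSpace E]

theorem ContDiffOn.integral_deriv_eq_sub (hab : a ≤ b) (hw : ContDiffOn ℝ 1 w (Icc a b)) :
    ∫ t in a..b, deriv w t = w b - w a := by
  refine intervalIntegral.integral_eq_sub_of_hasDerivAt_of_le hab hw.continuousOn
    (fun t ht => ?_) (hw.intervalIntegrable_deriv hab)
  exact ((hw.differentiableOn one_ne_zero t (Ioo_subset_Icc_self ht)).differentiableAt
    (Icc_mem_nhds ht.1 ht.2)).hasDerivAt

variable {σ : ℕ → ℝ} {n : ℕ}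

theorem integral_deriv_eq_sub_of_piecewise (hσ : ∀ i < n, σ i ≤ σ (i + 1))
    (hw : ∀ i < n, ContDiffOn ℝ 1 w (Icc (σ i) (σ (i + 1)))) :
    ∫ t in σ 0..σ n, deriv w t = w (σ n) - w (σ 0) := by
  rw [← intervalIntegral.sum_integral_adjacent_intervals fun i hi =>
      (hw i hi).intervalIntegrable_deriv (hσ i hi)]
  refine (Finset.sum_congr rfl fun i hi => ?_).trans (Finset.sum_range_sub (fun i => w (σ i)) n)
  exact (hw i (Finset.mem_range.mp hi)).integral_deriv_eq_sub (hσ i (Finset.mem_range.mp hi))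

theorem norm_sub_le_integral_of_piecewise {g : ℝ → ℝ} (hσ : ∀ i < n, σ i ≤ σ (i + 1))
    (h0 : σ 0 = a) (hn : σ n = b) (hw : ∀ i < n, ContDiffOn ℝ 1 w (Icc (σ i) (σ (i + 1))))
    (hg : IntervalIntegrable g volume a b) (hbound : ∀ t ∈ Icc a b, ‖deriv w t‖ ≤ g t) :
    ‖w b - w a‖ ≤ ∫ t in a..b, g t := by
  subst h0 hn
  rw [← integral_deriv_eq_sub_of_piecewise hσ hw]
  have hab : σ 0 ≤ σ n := monotoneOn_of_le_succ ordConnected_Iic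
    (fun i _ _ hi => hσ i (Nat.succ_le_iff.mp hi)) n.zero_le (mem_Iic.2 le_rfl) n.zero_le
  exact intervalIntegral.norm_integral_le_of_norm_le hab
    (ae_of_all _ fun t ht => hbound t (Ioc_subset_Icc_self ht)) hg

end PiecewiseFTC

section SolPaths

variable {γ : ℝ → ℝ × ℝ × ℝ}

def solSpeed (γ : ℝ → ℝ × ℝ × ℝ) (t : ℝ) : ℝ :=
  Real.sqrt (Real.exp (-(γ t).2.2) * (deriv (fun s => (γ s).1) t) ^ 2 +
    Real.exp ((γ t).2.2) * (deriv (fun s => (γ s).2.1) t) ^ 2 +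
    (deriv (fun s => (γ s).2.2) t) ^ 2)

theorem solLength_eq_integral_solSpeed : solLength γ = ∫ t in (0 : ℝ)..1, solSpeed γ t := rfl

theorem solLength_nonneg : 0 ≤ solLength γ :=
  intervalIntegral.integral_nonneg zero_le_one fun _ _ => sqrt_nonneg _

theorem abs_le_exp_half_mul_sqrt {u v r : ℝ} (h : exp (-u) * v ^ 2 ≤ r) :
    |v| ≤ exp (u / 2) * √r := by
  rw [exp_half, ← sqrt_mul (exp_pos u).le, ← sqrt_sq_eq_abs]
  refine sqrt_le_sqrt ?_
  calc v ^ 2 = exp u * (exp (-u) * v ^ 2) := by rw [← mul_assoc, ← exp_add]; simp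
    _ ≤ exp u * r := by gcongr

theorem abs_deriv_height_le_solSpeed (t : ℝ) :
    |deriv (fun s => (γ s).2.2) t| ≤ solSpeed γ t :=
  abs_le_sqrt (le_add_of_nonneg_left (by positivity))

theorem abs_deriv_fst_le_solSpeed (t : ℝ) :
    |deriv (fun s => (γ s).1) t| ≤ exp ((γ t).2.2 / 2) * solSpeed γ t :=
  abs_le_exp_half_mul_sqrt (le_add_of_le_of_nonneg (le_add_of_nonneg_right (by positivity))
    (sq_nonneg _))

theorem abs_deriv_snd_le_solSpeed (t : ℝ) :
    |deriv (fun s => (γ s).2.1) t| ≤ exp (-(γ t).2.2 / 2) * solSpeed γ t :=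
  abs_le_exp_half_mul_sqrt <| le_add_of_le_of_nonneg
    (by rw [neg_neg]; exact le_add_of_nonneg_left (by positivity)) (sq_nonneg _)

theorem ContDiffOn.intervalIntegrable_solSpeed {a b : ℝ} (hab : a ≤ b)
    (hγ : ContDiffOn ℝ 1 γ (Icc a b)) : IntervalIntegrable (solSpeed γ) volume a b := by
  rcases hab.eq_or_lt with rfl | hab
  · exact .refl
  have hd {f : ℝ → ℝ} (hf : ContDiffOn ℝ 1 f (Icc a b)) :
      ContinuousOn (derivWithin f (Icc a b)) (Icc a b) :=
    hf.continuousOn_derivWithin (uniqueDiffOn_Icc hab) le_rfl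
  have hz := hγ.snd.snd.continuousOn
  refine intervalIntegrable_of_eqOn_Ioo hab.le (g := fun t =>
    √(Real.exp (-(γ t).2.2) * derivWithin (fun s => (γ s).1) (Icc a b) t ^ 2 +
      Real.exp ((γ t).2.2) * derivWithin (fun s => (γ s).2.1) (Icc a b) t ^ 2 +
      derivWithin (fun s => (γ s).2.2) (Icc a b) t ^ 2)) ?_ fun t ht => ?_
  · have := hd hγ.fst; have := hd hγ.snd.fst; have := hd hγ.snd.snd
    fun_prop
  · simp only [solSpeed, eqOn_deriv_derivWithin_Icc ht]

namespace PiecewiseC1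

variable (hγ : PiecewiseC1 γ)
include hγ

theorem intervalIntegrable_solSpeed : IntervalIntegrable (solSpeed γ) volume 0 1 := by
  obtain ⟨n, τ, h0, h1, hτ, hC1⟩ := hγ
  rw [← h0, ← h1]
  exact .trans_iterate fun i hi => (hC1 i hi).intervalIntegrable_solSpeed (hτ i hi)

theorem abs_height_sub_le {t : ℝ} (ht : t ∈ Icc (0 : ℝ) 1) :
    |(γ t).2.2 - (γ 0).2.2| ≤ solLength γ := by
  obtain ⟨n, τ, h0, h1, hτ, hC1⟩ := id hγ
  have hint := hγ.intervalIntegrable_solSpeed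
  -- `τ` truncated at `t` is a partition of `[0, t]` into `C¹` pieces of `γ`
  calc |(γ t).2.2 - (γ 0).2.2| ≤ ∫ s in (0 : ℝ)..t, solSpeed γ s :=
        norm_sub_le_integral_of_piecewise (σ := fun i => min (τ i) t)
          (fun i hi => min_le_min_right t (hτ i hi)) (by simp [h0, ht.1]) (by simp [h1, ht.2])
          (fun i hi => (hC1 i hi).snd.snd.min_Icc (hτ i hi) t)
          (hint.mono_set (uIcc_subset_uIcc_left (by simp [ht.1, ht.2])))
          fun s _ => abs_deriv_height_le_solSpeed s
    _ ≤ solLength γ := intervalIntegral.integral_mono_interval le_rfl ht.1 ht.2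
        (ae_of_all _ fun _ => sqrt_nonneg _) hint

theorem abs_fst_sub_le :
    |(γ 1).1 - (γ 0).1| ≤ exp (((γ 0).2.2 + solLength γ) / 2) * solLength γ := by
  obtain ⟨n, τ, h0, h1, hτ, hC1⟩ := id hγ
  have h := norm_sub_le_integral_of_piecewise hτ h0 h1 (fun i hi => (hC1 i hi).fst)
    (hγ.intervalIntegrable_solSpeed.const_mul (exp (((γ 0).2.2 + solLength γ) / 2)))
    fun t ht => (abs_deriv_fst_le_solSpeed t).trans (mul_le_mul_of_nonneg_right
      (exp_le_exp.2 (by linarith [(abs_le.mp (hγ.abs_height_sub_le ht)).2])) (sqrt_nonneg _))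
  rwa [intervalIntegral.integral_const_mul, ← solLength_eq_integral_solSpeed] at h

theorem abs_snd_sub_le :
    |(γ 1).2.1 - (γ 0).2.1| ≤ exp ((-(γ 0).2.2 + solLength γ) / 2) * solLength γ := by
  obtain ⟨n, τ, h0, h1, hτ, hC1⟩ := id hγ
  have h := norm_sub_le_integral_of_piecewise hτ h0 h1 (fun i hi => (hC1 i hi).snd.fst)
    (hγ.intervalIntegrable_solSpeed.const_mul (exp ((-(γ 0).2.2 + solLength γ) / 2)))
    fun t ht => (abs_deriv_snd_le_solSpeed t).trans (mul_le_mul_of_nonneg_right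
      (exp_le_exp.2 (by linarith [(abs_le.mp (hγ.abs_height_sub_le ht)).1])) (sqrt_nonneg _))
  rwa [intervalIntegral.integral_const_mul, ← solLength_eq_integral_solSpeed] at h

end PiecewiseC1

theorem piecewiseC1_segment (p q : ℝ × ℝ × ℝ) :
    PiecewiseC1 fun t : ℝ => p + t • (q - p) := by
  refine ⟨1, fun i => i, by simp, by simp, fun i hi => ?_, fun i hi => ?_⟩ <;>
    obtain rfl : i = 0 := by omega
  · simp
  · exact (contDiff_const.add (contDiff_id.smul contDiff_const)).contDiffOn

theorem exists_path_of_dSol_lt {p q : ℝ × ℝ × ℝ} {r : ℝ} (h : dSol p q < r) :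
    ∃ γ, γ 0 = p ∧ γ 1 = q ∧ PiecewiseC1 γ ∧ solLength γ < r := by
  rw [dSol] at h
  obtain ⟨_, ⟨γ, h0, h1, hγ, rfl⟩, hlt⟩ := exists_lt_of_csInf_lt
    (by exact ⟨_, _, by simp, by simp, piecewiseC1_segment p q, rfl⟩) h
  exact ⟨γ, h0, h1, hγ, hlt⟩

theorem abs_sub_le_of_dSol_lt {p q : ℝ × ℝ × ℝ} {r : ℝ} (h : dSol p q < r) :
    |q.2.2 - p.2.2| ≤ r ∧ |q.1 - p.1| ≤ exp ((p.2.2 + r) / 2) * r ∧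
      |q.2.1 - p.2.1| ≤ exp ((-p.2.2 + r) / 2) * r := by
  obtain ⟨γ, rfl, rfl, hγ, hlt⟩ := exists_path_of_dSol_lt h
  have hℓ := solLength_nonneg (γ := γ)
  refine ⟨(hγ.abs_height_sub_le ⟨zero_le_one, le_rfl⟩).trans hlt.le,
    hγ.abs_fst_sub_le.trans ?_, hγ.abs_snd_sub_le.trans ?_⟩ <;> gcongr

end SolPaths

theorem volume_prod_prod_le {A B C : Set ℝ} {a b c : ℝ} (ha : 0 ≤ a) (hb : 0 ≤ b)
    (hA : volume A ≤ .ofReal a) (hB : volume B ≤ .ofReal b) (hC : volume C ≤ .ofReal c) :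
    volume (A ×ˢ B ×ˢ C) ≤ .ofReal (a * b * c) := by
  rw [Measure.volume_eq_prod, Measure.prod_prod, Measure.volume_eq_prod, Measure.prod_prod,
    mul_assoc, ENNReal.ofReal_mul ha, ENNReal.ofReal_mul hb]
  gcongr

theorem volume_Icc_neg_self (R : ℝ) : volume (Icc (-R) R) = .ofReal (2 * R) := by
  rw [Real.volume_Icc, sub_neg_eq_add, two_mul]

theorem volume_abs_mem_Icc_le (c : ℝ) {d : ℝ} (hd : 0 ≤ d) :
    volume {x : ℝ | c - d ≤ |x| ∧ |x| ≤ c + d} ≤ .ofReal (4 * d) := by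
  calc volume {x : ℝ | c - d ≤ |x| ∧ |x| ≤ c + d}
      ≤ volume (Icc (-(c + d)) (-(c - d)) ∪ Icc (c - d) (c + d)) := by
        refine measure_mono fun x ⟨hl, hr⟩ => ?_
        rcases le_total 0 x with hx | hx
        · rw [abs_of_nonneg hx] at hl hr; exact .inr ⟨hl, hr⟩
        · rw [abs_of_nonpos hx] at hl hr; exact .inl ⟨by linarith, by linarith⟩
    _ ≤ volume (Icc (-(c + d)) (-(c - d))) + volume (Icc (c - d) (c + d)) := measure_union_le _ _
    _ = .ofReal (4 * d) := by
        rw [Real.volume_Icc, Real.volume_Icc, ← ENNReal.ofReal_add (by linarith) (by linarith)]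
        ring_nf

theorem mem_solBox {L : ℝ} {q : ℝ × ℝ × ℝ} :
    q ∈ solBox L ↔ |q.1| ≤ exp L ∧ |q.2.1| ≤ exp L ∧ |q.2.2| ≤ L := by
  simp only [solBox, mem_prod, mem_Icc, abs_le]

theorem volume_solBox (L : ℝ) : volume (solBox L) = .ofReal (8 * L * exp (2 * L)) := by
  rw [solBox, Measure.volume_eq_prod, Measure.prod_prod, Measure.volume_eq_prod,
    Measure.prod_prod, volume_Icc_neg_self, Real.volume_Icc,
    ← ENNReal.ofReal_mul (by positivity), ← ENNReal.ofReal_mul (by positivity)]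
  congr 1
  rw [show 2 * L = L + L by ring, exp_add]
  ring

theorem solBoxBdryNbhd_subset {L K : ℝ} (hK : 2 * exp ((L + 4) / 2) ≤ K) :
    solBoxBdryNbhd L ⊆
      {x | exp L - K ≤ |x| ∧ |x| ≤ exp L + K} ×ˢ Icc (-(exp L + K)) (exp L + K) ×ˢ
          Icc (-(L + 2)) (L + 2) ∪
        Icc (-(exp L + K)) (exp L + K) ×ˢ {y | exp L - K ≤ |y| ∧ |y| ≤ exp L + K} ×ˢ
          Icc (-(L + 2)) (L + 2) ∪
        Icc (-(exp L + K)) (exp L + K) ×ˢ Icc (-(exp L + K)) (exp L + K) ×ˢ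
          {z | L - 2 ≤ |z| ∧ |z| ≤ L + 2} := by
  rintro p ⟨⟨q, hq, hpq⟩, q', hq', hpq'⟩
  rw [mem_solBox] at hq
  rw [mem_solBox, not_and_or, not_and_or, not_le, not_le] at hq'
  obtain ⟨hz, hx, hy⟩ := abs_sub_le_of_dSol_lt (hpq.trans_lt one_lt_two)
  obtain ⟨hz', hx', hy'⟩ := abs_sub_le_of_dSol_lt (hpq'.trans_lt one_lt_two)
  have hpz : |p.2.2| ≤ L + 2 := by
    linarith [abs_sub_abs_le_abs_sub p.2.2 q.2.2, abs_sub_comm p.2.2 q.2.2]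
  have hKx : exp ((p.2.2 + 2) / 2) * 2 ≤ K := by
    linarith [exp_le_exp.2 (show (p.2.2 + 2) / 2 ≤ (L + 4) / 2 by linarith [abs_le.mp hpz])]
  have hKy : exp ((-p.2.2 + 2) / 2) * 2 ≤ K := by
    linarith [exp_le_exp.2 (show (-p.2.2 + 2) / 2 ≤ (L + 4) / 2 by linarith [abs_le.mp hpz])]
  have hpx : |p.1| ≤ exp L + K := by
    linarith [abs_sub_abs_le_abs_sub p.1 q.1, abs_sub_comm p.1 q.1]
  have hpy : |p.2.1| ≤ exp L + K := by
    linarith [abs_sub_abs_le_abs_sub p.2.1 q.2.1, abs_sub_comm p.2.1 q.2.1]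
  rcases hq' with h | h | h
  · exact .inl <| .inl ⟨⟨by linarith [abs_sub_abs_le_abs_sub q'.1 p.1], hpx⟩,
      abs_le.mp hpy, abs_le.mp hpz⟩
  · exact .inl <| .inr ⟨abs_le.mp hpx,
      ⟨by linarith [abs_sub_abs_le_abs_sub q'.2.1 p.2.1], hpy⟩, abs_le.mp hpz⟩
  · exact .inr ⟨abs_le.mp hpx, abs_le.mp hpy,
      by linarith [abs_sub_abs_le_abs_sub q'.2.2 p.2.2], hpz⟩

theorem volume_solBoxBdryNbhd_le {L : ℝ} (hL : 1 ≤ L) :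
    volume (solBoxBdryNbhd L) ≤ .ofReal (30000 * exp (2 * L)) := by
  set u := exp (L / 2)
  have hu : 1 ≤ u := one_le_exp (by linarith)
  have hexpL : exp L = u ^ 2 := by rw [sq, ← exp_add, add_halves]
  have hexp2L : exp (2 * L) = u ^ 4 := by rw [← exp_nat_mul]; ring_nf
  have hL2 : L + 2 ≤ 2 * u := by linarith [add_one_le_exp (L / 2)]
  have hK : 2 * exp ((L + 4) / 2) ≤ 16 * u := by
    have : exp 2 < 8 := by
      rw [show (2 : ℝ) = 1 + 1 by norm_num, exp_add]
      nlinarith [exp_one_lt_d9, exp_pos 1]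
    rw [show (L + 4) / 2 = 2 + L / 2 by ring, exp_add]
    nlinarith [exp_pos (L / 2)]
  have hI := (volume_Icc_neg_self (exp L + 16 * u)).le
  have hJ := (volume_Icc_neg_self (L + 2)).trans_le
    (ENNReal.ofReal_le_ofReal (q := 4 * u) (by linarith))
  have hSx := volume_abs_mem_Icc_le (exp L) (d := 16 * u) (by positivity)
  have hSz := volume_abs_mem_Icc_le L zero_le_two
  calc volume (solBoxBdryNbhd L)
      ≤ _ := measure_mono (solBoxBdryNbhd_subset hK)
    _ ≤ _ := (measure_union_le _ _).trans (add_le_add_left (measure_union_le _ _) _)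
    _ ≤ _ := add_le_add
        (add_le_add (volume_prod_prod_le (by positivity) (by positivity) hSx hI hJ)
          (volume_prod_prod_le (by positivity) (by positivity) hI hSx hJ))
        (volume_prod_prod_le (by positivity) (by positivity) hI hI hSz)
    _ ≤ .ofReal (30000 * exp (2 * L)) := by
      rw [← ENNReal.ofReal_add (by positivity) (by positivity),
        ← ENNReal.ofReal_add (by positivity) (by positivity), hexp2L, hexpL]
      refine ENNReal.ofReal_le_ofReal ?_
      have hA : u ^ 2 + 16 * u ≤ 17 * u ^ 2 := by nlinarith
      have hA2 : (u ^ 2 + 16 * u) ^ 2 ≤ (17 * u ^ 2) ^ 2 := by gcongr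
      nlinarith [mul_le_mul_of_nonneg_left hA (sq_nonneg u)]

/-- **Lemma.** The boxes `B(L)` form a Følner family for `Sol`: the (Riemannian = Lebesgue)
volume of `B(L)` is `8·L·e^{2L}`, while the volume of the `1`-neighborhood of its boundary is
`O(e^{2L})`; consequently the ratio of the two tends to `0` as `L → ∞`. -/
theorem sol_boxes_folner :
    (∀ L : ℝ, 0 < L →
      volume (solBox L) = ENNReal.ofReal (8 * L * Real.exp (2 * L))) ∧
    ∃ C₀ : ℝ, 0 < C₀ ∧
      (∀ L : ℝ, 1 ≤ L →
        volume (solBoxBdryNbhd L) ≤ ENNReal.ofReal (C₀ * Real.exp (2 * L))) ∧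
      Filter.Tendsto
        (fun L : ℝ => (volume (solBoxBdryNbhd L)).toReal / (volume (solBox L)).toReal)
        Filter.atTop (nhds 0) := by
  refine ⟨fun L _ => volume_solBox L, 30000, by norm_num, fun L => volume_solBoxBdryNbhd_le, ?_⟩
  refine squeeze_zero' (.of_forall fun L => by positivity) ?_
    (tendsto_const_nhds (x := (3750 : ℝ)).div_atTop tendsto_id)
  filter_upwards [eventually_ge_atTop 1] with L hL
  have hbdry := ENNReal.toReal_le_of_le_ofReal (by positivity) (volume_solBoxBdryNbhd_le hL)
  rw [volume_solBox, ENNReal.toReal_ofReal (by positivity), id,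
    div_le_div_iff₀ (by positivity) (by positivity)]
  nlinarith [exp_pos (2 * L)]
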